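/- Let X be a topological space and let 𝒪'' ≪ 𝒪' ≪ 𝒪 be a chain of super-refinements of open covers of X. Then every (𝒪'',𝒪')-sibling map f: X → X induces a well-defined chain map f_*: 𝒞_*(X,𝒪'') → 𝒞_*(X,𝒪), given on generators by [x_0,…,x_n] ↦ [f(x_0),…,f(x_n)]; in particular, if [x_0,…,x_n] is 𝒪''-tiny then [f(x_0),…,f(x_n)] is 𝒪-tiny. Moreover, f_* is chain-homotopic to the standard inclusion 𝒞_*(X,𝒪'') ⊆ 𝒞_*(X,𝒪), via a chain homotopy taking values in 𝒞_*(X,𝒪). -/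

import Mathlib

/-- Discrete chains with `m` vertices: the free `ℤ`-module on ordered `m`-tuples of points. -/
abbrev DChain (α : Type*) (m : ℕ) := (Fin m → α) →₀ ℤ

/-- The `i`-th face operator on discrete chains, deleting the `i`-th vertex. -/
noncomputable def dface {α : Type*} {m : ℕ} (i : Fin (m + 1)) :
    DChain α (m + 1) →ₗ[ℤ] DChain α m :=
  Finsupp.lmapDomain ℤ ℤ (fun σ => σ ∘ i.succAbove)

/-- The simplicial boundary operator on discrete chains:
`∂[x₀,…,xₙ] = ∑ i, (-1)^i [x₀,…,x̂ᵢ,…,xₙ]`. -/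
noncomputable def dbd {α : Type*} {m : ℕ} : DChain α (m + 1) →ₗ[ℤ] DChain α m :=
  ∑ i : Fin (m + 1), ((-1 : ℤ) ^ (i : ℕ)) • dface i

/-- The chain map induced by a map on vertices. -/
noncomputable def vmap {α β : Type*} (f : α → β) {m : ℕ} : DChain α m →ₗ[ℤ] DChain β m :=
  Finsupp.lmapDomain ℤ ℤ (fun σ => f ∘ σ)

/-- The support of a discrete chain: the set of vertices appearing in its
cancellation-free expression. -/
def chainSupp {α : Type*} {m : ℕ} (c : DChain α m) : Set α :=
  ⋃ σ ∈ c.support, Set.range σ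

/-- An open cover of a topological space. -/
def IsOpenCover {X : Type*} [TopologicalSpace X] (O : Set (Set X)) : Prop :=
  (∀ U ∈ O, IsOpen U) ∧ ⋃₀ O = Set.univ

/-- `O'` refines `O`: every element of `O'` is contained in some element of `O`. -/
def Refines {X : Type*} (O' O : Set (Set X)) : Prop :=
  ∀ U ∈ O', ∃ V ∈ O, U ⊆ V

/-- `O'` is a super-refinement of `O` (written `O' ≪ O`) if every point `x` has a *parent*:
an element of `O` containing every member of `O'` that contains `x`. -/
def SuperRefines {X : Type*} (O' O : Set (Set X)) : Prop :=
  ∀ x : X, ∃ U ∈ O, ∀ V ∈ O', x ∈ V → V ⊆ U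

/-- A subset is `O`-tiny if it is contained in a single element of `O`. -/
def Tiny {X : Type*} (O : Set (Set X)) (A : Set X) : Prop :=
  ∃ U ∈ O, A ⊆ U

/-- A discrete chain is `O`-fine if each of its simplices is `O`-tiny. -/
def FineChain {X : Type*} (O : Set (Set X)) {m : ℕ} (c : DChain X m) : Prop :=
  ∀ σ ∈ c.support, Tiny O (Set.range σ)

/-- A chain of tuples of sets is a nerve chain of the cover `O` if each of its simplices is a
tuple of elements of `O` with nonempty intersection. -/
def NerveChain {X : Type*} (O : Set (Set X)) {m : ℕ} (c : DChain (Set X) m) : Prop :=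
  ∀ τ ∈ c.support, (∀ i, τ i ∈ O) ∧ (⋂ i, τ i).Nonempty

/-! A sibling map sends each point `x` into its `O'`-parent `P x`. For an `O''`-tiny simplex
all these parents contain a common member of `O''`, so they lie in the `O`-parent of any one
vertex; hence a simplex together with its image is `O`-tiny.

The homotopy is the cone construction `H σ = σ₀ * (f_* σ - σ - H ∂σ)`. By induction and
`∂∂ = 0` the bracket is a cycle, and `∂ (p * z) = z` for a cycle `z`, which gives
`∂H + H∂ = f_* - id`. The simplices of `H σ` have their vertices among those of `σ` and `f ∘ σ`,
so `H` maps `O''`-fine chains to `O`-fine chains. -/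

open Finsupp Set

section Chains

variable {α β : Type*}

@[simp] lemma dface_single {m : ℕ} (i : Fin (m + 1)) (σ : Fin (m + 1) → α) (b : ℤ) :
    dface i (single σ b) = single (σ ∘ i.succAbove) b := by
  simp [dface]

lemma dbd_single {m : ℕ} (σ : Fin (m + 1) → α) (b : ℤ) :
    dbd (single σ b) = ∑ i : Fin (m + 1), ((-1 : ℤ) ^ (i : ℕ)) • single (σ ∘ i.succAbove) b := by
  simp [dbd, LinearMap.sum_apply]

@[simp] lemma vmap_single (f : α → β) {m : ℕ} (σ : Fin m → α) (b : ℤ) :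
    vmap f (single σ b) = single (f ∘ σ) b := by
  simp [vmap]

lemma dbd_vmap (f : α → β) {m : ℕ} (c : DChain α (m + 1)) :
    dbd (vmap f c) = vmap f (dbd c) := by
  induction c using Finsupp.induction_linear with
  | zero => simp
  | add c d hc hd => simp only [map_add, hc, hd]
  | single σ b =>
    rw [vmap_single, dbd_single, dbd_single, map_sum]
    exact Finset.sum_congr rfl fun i _ => by rw [map_smul, vmap_single]; rfl

lemma vmap_of_fin_zero (f : α → α) (c : DChain α 0) : vmap f c = c := by
  have hf : (fun σ : Fin 0 → α => f ∘ σ) = id := funext fun _ => Subsingleton.elim _ _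
  rw [vmap, lmapDomain_apply, hf, mapDomain_id]

noncomputable def coneMap (p : α) {m : ℕ} : DChain α m →ₗ[ℤ] DChain α (m + 1) :=
  Finsupp.lmapDomain ℤ ℤ (fun σ => Fin.cons p σ)

@[simp] lemma coneMap_single (p : α) {m : ℕ} (σ : Fin m → α) (b : ℤ) :
    coneMap p (single σ b) = single (Fin.cons p σ) b := by
  simp [coneMap]

lemma single_eq_coneMap {m : ℕ} (σ : Fin (m + 1) → α) (b : ℤ) :
    single σ b = coneMap (σ 0) (single (Fin.tail σ) b) := by
  rw [coneMap_single, Fin.cons_self_tail]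

lemma dbd_coneMap_of_fin_zero (p : α) (c : DChain α 0) : dbd (coneMap p c) = c := by
  induction c using Finsupp.induction_linear with
  | zero => simp
  | add c d hc hd => simp only [map_add, hc, hd]
  | single σ b =>
    rw [coneMap_single, dbd_single, Fin.sum_univ_one, Fin.val_zero, pow_zero, one_smul]
    congr 1

lemma dbd_coneMap (p : α) {m : ℕ} (c : DChain α (m + 1)) :
    dbd (coneMap p c) = c - coneMap p (dbd c) := by
  induction c using Finsupp.induction_linear with
  | zero => simp
  | add c d hc hd => simp only [map_add, hc, hd]; abel
  | single σ b =>
    have face_zero : (Fin.cons p σ : Fin (m + 2) → α) ∘ (0 : Fin (m + 2)).succAbove = σ := by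
      funext j; simp
    have face_succ (j : Fin (m + 1)) : (Fin.cons p σ : Fin (m + 2) → α) ∘ j.succ.succAbove =
        Fin.cons p (σ ∘ j.succAbove) := by
      funext i
      refine Fin.cases ?_ (fun i => ?_) i
      · simp
      · simp [Fin.succ_succAbove_succ]
    rw [coneMap_single, dbd_single, dbd_single, Fin.sum_univ_succ]
    simp only [face_zero, face_succ, Fin.val_zero, pow_zero, one_smul, Fin.val_succ, pow_succ,
      mul_neg_one, neg_smul, map_sum, map_smul, coneMap_single, Finset.sum_neg_distrib]
    abel

lemma dbd_coneMap_of_dbd_eq_zero (p : α) {m : ℕ} {z : DChain α (m + 1)} (hz : dbd z = 0) :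
    dbd (coneMap p z) = z := by
  rw [dbd_coneMap, hz, map_zero, sub_zero]

/-- Since every simplex is the cone on its tail, `∂∂ = 0` follows from `∂ (p * c) = c - p * ∂c`. -/
theorem dbd_dbd : ∀ {m : ℕ} (c : DChain α (m + 2)), dbd (dbd c) = 0
  | 0, c => by
    induction c using Finsupp.induction_linear with
    | zero => simp
    | add c d hc hd => simp only [map_add, hc, hd, add_zero]
    | single σ b =>
      rw [single_eq_coneMap, dbd_coneMap, map_sub, dbd_coneMap_of_fin_zero, sub_self]
  | m + 1, c => by
    induction c using Finsupp.induction_linear with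
    | zero => simp
    | add c d hc hd => simp only [map_add, hc, hd, add_zero]
    | single σ b =>
      rw [single_eq_coneMap, dbd_coneMap, map_sub, dbd_coneMap, dbd_dbd, map_zero, sub_zero,
        sub_self]

end Chains

section ConeHomotopy

variable {α : Type*} (f : α → α)

noncomputable def coneHomotopy : (m : ℕ) → DChain α m →ₗ[ℤ] DChain α (m + 1)
  | 0 => 0
  | m + 1 => Finsupp.lsum ℤ fun σ => LinearMap.toSpanSingleton ℤ _ <|
      coneMap (σ 0) (vmap f (single σ 1) - single σ 1 - coneHomotopy m (dbd (single σ 1)))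

lemma coneHomotopy_succ_single {m : ℕ} (σ : Fin (m + 1) → α) :
    coneHomotopy f (m + 1) (single σ 1) =
      coneMap (σ 0) (vmap f (single σ 1) - single σ 1 - coneHomotopy f m (dbd (single σ 1))) := by
  simp [coneHomotopy]

lemma dbd_coneHomotopy_add_of_dbd_eq_zero {m : ℕ}
    (hcycle : ∀ c : DChain α (m + 1), dbd (vmap f c - c - coneHomotopy f m (dbd c)) = 0)
    (c : DChain α (m + 1)) :
    dbd (coneHomotopy f (m + 1) c) + coneHomotopy f m (dbd c) = vmap f c - c := by
  suffices dbd ∘ₗ coneHomotopy f (m + 1) + coneHomotopy f m ∘ₗ dbd = vmap f - LinearMap.id from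
    LinearMap.congr_fun this c
  refine Finsupp.lhom_ext' fun σ => LinearMap.ext_ring ?_
  simp only [LinearMap.add_apply, LinearMap.comp_apply, LinearMap.sub_apply, lsingle_apply,
    LinearMap.id_apply, coneHomotopy_succ_single, dbd_coneMap_of_dbd_eq_zero _ (hcycle _),
    sub_add_cancel]

theorem dbd_coneHomotopy_add : ∀ (m : ℕ) (c : DChain α (m + 1)),
    dbd (coneHomotopy f (m + 1) c) + coneHomotopy f m (dbd c) = vmap f c - c
  | 0, c => dbd_coneHomotopy_add_of_dbd_eq_zero f (fun c => by
      simp [coneHomotopy, dbd_vmap, vmap_of_fin_zero]) c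
  | m + 1, c => dbd_coneHomotopy_add_of_dbd_eq_zero f (fun c => by
      have h := dbd_coneHomotopy_add m (dbd c)
      rw [dbd_dbd, map_zero, add_zero] at h
      rw [map_sub, map_sub, h, dbd_vmap, sub_self]) c

end ConeHomotopy

lemma Finsupp.map_mem_supported_of_single {R ι κ : Type*} [Semiring R] {s : Set ι} {t : Set κ}
    (φ : (ι →₀ R) →ₗ[R] (κ →₀ R)) (h : ∀ i ∈ s, φ (single i 1) ∈ supported R R t)
    {c : ι →₀ R} (hc : c ∈ supported R R s) : φ c ∈ supported R R t := by
  rw [supported_eq_span_single] at hc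
  refine (Submodule.span_le (p := (supported R R t).comap φ)).mpr ?_ hc
  rintro _ ⟨i, hi, rfl⟩
  exact h i hi

section ChainsOn

variable {α β : Type*}

def chainsOn (S : Set α) (m : ℕ) : Submodule ℤ (DChain α m) :=
  supported ℤ ℤ {σ | range σ ⊆ S}

lemma single_mem_chainsOn {S : Set α} {m : ℕ} {σ : Fin m → α} (hσ : range σ ⊆ S) (b : ℤ) :
    single σ b ∈ chainsOn S m :=
  single_mem_supported ℤ b hσ

lemma chainsOn_mono {S T : Set α} (hST : S ⊆ T) (m : ℕ) : chainsOn S m ≤ chainsOn T m :=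
  supported_mono fun _ hσ => Set.Subset.trans hσ hST

lemma dbd_mem_chainsOn {S : Set α} {m : ℕ} {c : DChain α (m + 1)} (hc : c ∈ chainsOn S (m + 1)) :
    dbd c ∈ chainsOn S m := by
  refine map_mem_supported_of_single dbd (fun σ hσ => ?_) hc
  rw [dbd_single]
  exact Submodule.sum_mem _ fun i _ => Submodule.smul_mem _ _ <|
    single_mem_chainsOn ((range_comp_subset_range _ σ).trans hσ) 1

lemma vmap_mem_chainsOn (f : α → β) {S : Set α} {m : ℕ} {c : DChain α m}
    (hc : c ∈ chainsOn S m) : vmap f c ∈ chainsOn (f '' S) m := by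
  refine map_mem_supported_of_single (vmap f) (fun σ hσ => ?_) hc
  rw [vmap_single]
  exact single_mem_chainsOn ((range_comp f σ).trans_subset (image_mono hσ)) 1

lemma coneMap_mem_chainsOn {S : Set α} {p : α} (hp : p ∈ S) {m : ℕ} {c : DChain α m}
    (hc : c ∈ chainsOn S m) : coneMap p c ∈ chainsOn S (m + 1) := by
  refine map_mem_supported_of_single (coneMap p) (fun σ hσ => ?_) hc
  rw [coneMap_single]
  exact single_mem_chainsOn (Fin.range_cons p σ ▸ insert_subset hp hσ) 1

lemma coneHomotopy_mem_chainsOn (f : α → α) {S : Set α} (m : ℕ) {c : DChain α m}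
    (hc : c ∈ chainsOn S m) : coneHomotopy f m c ∈ chainsOn (S ∪ f '' S) (m + 1) := by
  induction m with
  | zero => exact zero_mem _
  | succ m ih =>
    refine map_mem_supported_of_single _ (fun σ hσ => ?_) hc
    have hs : single σ 1 ∈ chainsOn S (m + 1) := single_mem_chainsOn hσ 1
    rw [coneHomotopy_succ_single]
    refine coneMap_mem_chainsOn (mem_union_left _ (hσ (mem_range_self 0))) (sub_mem (sub_mem ?_ ?_) (ih (dbd_mem_chainsOn hs)))
    · exact chainsOn_mono subset_union_right _ (vmap_mem_chainsOn f hs)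
    · exact chainsOn_mono subset_union_left _ hs

end ChainsOn

section Fine

variable {X : Type*} {O'' O : Set (Set X)}

lemma FineChain.of_mem_chainsOn {S : Set X} (hS : Tiny O S) {m : ℕ} {c : DChain X m}
    (hc : c ∈ chainsOn S m) : FineChain O c := fun _ hσ =>
  let ⟨U, hU, hSU⟩ := hS
  ⟨U, hU, ((mem_supported ℤ c).mp hc hσ).trans hSU⟩

lemma FineChain.map_of_single {m n : ℕ} (φ : DChain X m →ₗ[ℤ] DChain X n)
    (h : ∀ σ : Fin m → X, Tiny O'' (range σ) → FineChain O (φ (single σ 1)))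
    {c : DChain X m} (hc : FineChain O'' c) : FineChain O (φ c) :=
  map_mem_supported_of_single φ h hc

lemma SuperRefines.tiny_union_image {O' : Set (Set X)} (h : SuperRefines O' O)
    {P : X → Set X} {ch : Set X → X} (hP : ∀ x : X, P x ∈ O' ∧ ∀ V ∈ O'', x ∈ V → V ⊆ P x)
    (hch : ∀ U ∈ O', ch U ∈ U) {A : Set X} (hA : Tiny O'' A) (hne : A.Nonempty) :
    Tiny O (A ∪ (fun x => ch (P x)) '' A) := by
  obtain ⟨W, hW, hAW⟩ := hA
  obtain ⟨x₀, hx₀⟩ := hne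
  obtain ⟨U, hU, hparent⟩ := h x₀
  have hPU (x : X) (hx : x ∈ A) : x ∈ P x ∧ P x ⊆ U := by
    have hWP : W ⊆ P x := (hP x).2 W hW (hAW hx)
    exact ⟨hWP (hAW hx), hparent _ (hP x).1 (hWP (hAW hx₀))⟩
  refine ⟨U, hU, union_subset (fun x hx => (hPU x hx).2 (hPU x hx).1) ?_⟩
  rintro _ ⟨x, hx, rfl⟩
  exact (hPU x hx).2 (hch _ (hP x).1)

end Fine

theorem siblingMap_chainMap_general {X : Type*} (O'' O' O : Set (Set X))
    (h1 : SuperRefines O' O)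
    (f : X → X)
    (hf : ∃ (P : X → Set X) (ch : Set X → X),
      (∀ x : X, P x ∈ O' ∧ ∀ V ∈ O'', x ∈ V → V ⊆ P x) ∧
      (∀ U ∈ O', ch U ∈ U) ∧ f = fun x => ch (P x)) :
    (∀ (m : ℕ) (σ : Fin (m + 1) → X), Tiny O'' (Set.range σ) →
      Tiny O (Set.range (fun j => f (σ j)))) ∧
    (∀ (m : ℕ) (c : DChain X (m + 1)), FineChain O'' c → FineChain O (vmap f c)) ∧
    (∀ (m : ℕ) (c : DChain X (m + 2)), dbd (vmap f c) = vmap f (dbd c)) ∧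
    (∃ H : ∀ m : ℕ, DChain X (m + 1) →ₗ[ℤ] DChain X (m + 2),
      (∀ (m : ℕ) (c : DChain X (m + 1)), FineChain O'' c → FineChain O (H m c)) ∧
      (∀ c : DChain X 1, FineChain O'' c →
        dbd (H 0 c) = vmap f c - c) ∧
      (∀ (m : ℕ) (c : DChain X (m + 2)), FineChain O'' c →
        dbd (H (m + 1) c) + H m (dbd c) = vmap f c - c)) := by
  obtain ⟨P, ch, hP, hch, rfl⟩ := hf
  have tiny {m : ℕ} (σ : Fin (m + 1) → X) (hσ : Tiny O'' (range σ)) :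
      Tiny O (range σ ∪ (fun x => ch (P x)) '' range σ) :=
    h1.tiny_union_image hP hch hσ (range_nonempty σ)
  have tiny_image {m : ℕ} (σ : Fin (m + 1) → X) (hσ : Tiny O'' (range σ)) :
      Tiny O (range fun j => ch (P (σ j))) := by
    obtain ⟨U, hU, hsub⟩ := tiny σ hσ
    exact ⟨U, hU, (range_comp _ σ).trans_subset subset_union_right |>.trans hsub⟩
  refine ⟨fun m => tiny_image, fun m c => FineChain.map_of_single _ fun σ hσ => ?_,
    fun m c => dbd_vmap _ c, fun m => coneHomotopy _ (m + 1),
    fun m c => FineChain.map_of_single _ fun σ hσ => ?_,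
    fun c _ => by simpa [coneHomotopy] using dbd_coneHomotopy_add _ 0 c,
    fun m c _ => dbd_coneHomotopy_add _ (m + 1) c⟩
  · rw [vmap_single]
    exact FineChain.of_mem_chainsOn (tiny_image σ hσ) (single_mem_chainsOn subset_rfl 1)
  · exact FineChain.of_mem_chainsOn (tiny σ hσ)
      (coneHomotopy_mem_chainsOn _ _ (single_mem_chainsOn subset_rfl 1))

/-- Let `O'' ≪ O' ≪ O` be a chain of super-refinements of open covers of
`X`.  Every `(O'',O')`-sibling map `f : X → X` (the composition of an `(O'',O')`-parent map
`X → O'` and a child map `O' → X`) induces a well-defined chain map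
`f_* : 𝒞_*(X,O'') → 𝒞_*(X,O)`, `[x₀,…,xₙ] ↦ [f x₀,…,f xₙ]`: `O''`-tiny simplices are sent
to `O`-tiny simplices, and the map commutes with the boundary.  Moreover `f_*` is
chain-homotopic to the standard inclusion, via a chain homotopy with values in
`𝒞_*(X,O)`. -/
theorem siblingMap_chainMap {X : Type*} [TopologicalSpace X] (O'' O' O : Set (Set X))
    (hO'' : IsOpenCover O'') (hO' : IsOpenCover O') (hO : IsOpenCover O)
    (h2 : SuperRefines O'' O') (h1 : SuperRefines O' O)
    (f : X → X)
    (hf : ∃ (P : X → Set X) (ch : Set X → X),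
      (∀ x : X, P x ∈ O' ∧ ∀ V ∈ O'', x ∈ V → V ⊆ P x) ∧
      (∀ U ∈ O', ch U ∈ U) ∧ f = fun x => ch (P x)) :
    (∀ (m : ℕ) (σ : Fin (m + 1) → X), Tiny O'' (Set.range σ) →
      Tiny O (Set.range (fun j => f (σ j)))) ∧
    (∀ (m : ℕ) (c : DChain X (m + 1)), FineChain O'' c → FineChain O (vmap f c)) ∧
    (∀ (m : ℕ) (c : DChain X (m + 2)), dbd (vmap f c) = vmap f (dbd c)) ∧
    (∃ H : ∀ m : ℕ, DChain X (m + 1) →ₗ[ℤ] DChain X (m + 2),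
      (∀ (m : ℕ) (c : DChain X (m + 1)), FineChain O'' c → FineChain O (H m c)) ∧
      (∀ c : DChain X 1, FineChain O'' c →
        dbd (H 0 c) = vmap f c - c) ∧
      (∀ (m : ℕ) (c : DChain X (m + 2)), FineChain O'' c →
        dbd (H (m + 1) c) + H m (dbd c) = vmap f c - c)) :=
  siblingMap_chainMap_general O'' O' O h1 f hf
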